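/- Let φ(x) = x² + x·sin x + 2x and ψ(x) = φ(x) - 2x for x > 0. Then ψ(x) ≥ 0 for all x > 0, liminf_{x→∞} ψ(x)/x = +∞, φ(x) - ψ(x) = 2x → +∞ as x → ∞, yet liminf_{x→∞}(φ**(x) - ψ(x)) < +∞, where φ** is the largest convex minorant of φ. In fact 0 ≤ φ**(x̃_k) - ψ(x̃_k) ≤ π² at the points x̃_k = 5π/2 + 2kπ. -/
import Mathlib


open Filter Set Topology

/-- `φ` admits an affine minorant on `(0,∞)`. -/
def AffBdd (φ : ℝ → ℝ) : Prop := ∃ a b : ℝ, ∀ x > 0, a * x + b ≤ φ x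

/-- The biconjugate of `φ` on `(0,∞)`: the pointwise supremum of all affine
minorants of `φ` on `(0,∞)`, i.e. the largest convex minorant of `φ`. -/
noncomputable def biconj (φ : ℝ → ℝ) (x : ℝ) : ℝ :=
  sSup {y : ℝ | ∃ a b : ℝ, (∀ t > 0, a * t + b ≤ φ t) ∧ y = a * x + b}

noncomputable def phi14 (x : ℝ) : ℝ := x ^ 2 + x * Real.sin x + 2 * x

noncomputable def psi14 (x : ℝ) : ℝ := phi14 x - 2 * x

private lemma sin_key1 (k : ℕ) : Real.sin (5 * Real.pi / 2 + 2 * k * Real.pi) = 1 := by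
  have h : 5 * Real.pi / 2 + 2 * k * Real.pi
      = Real.pi / 2 + (k + 1 : ℕ) * (2 * Real.pi) := by push_cast; ring
  rw [h, Real.sin_add_nat_mul_two_pi, Real.sin_pi_div_two]

private lemma sin_key2 (k : ℕ) : Real.sin (3 * Real.pi / 2 + 2 * k * Real.pi) = -1 := by
  have h : 3 * Real.pi / 2 + 2 * k * Real.pi
      = (Real.pi / 2 + Real.pi) + (k : ℕ) * (2 * Real.pi) := by push_cast; ring
  rw [h, Real.sin_add_nat_mul_two_pi, Real.sin_add_pi, Real.sin_pi_div_two]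

private lemma psi_nonneg : ∀ x > 0, 0 ≤ psi14 x := by
  intro x hx
  have hs : -x ≤ Real.sin x := by
    rcases le_or_gt x Real.pi with h | h
    · have h0 : 0 ≤ Real.sin x := Real.sin_nonneg_of_nonneg_of_le_pi hx.le h
      linarith
    · have := Real.neg_one_le_sin x
      have : (1:ℝ) ≤ x := le_trans (by linarith [Real.pi_gt_three]) h.le
      linarith [Real.neg_one_le_sin x]
  unfold psi14 phi14
  nlinarith

private lemma phi_lb (t : ℝ) (ht : 0 < t) : t ^ 2 + t ≤ phi14 t := by
  have hs : -1 ≤ Real.sin t := Real.neg_one_le_sin t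
  have : -t ≤ t * Real.sin t := by nlinarith
  unfold phi14; nlinarith

/-- chord bound for any member of the affine-minorant value set -/
private lemma mem_bound (k : ℕ) (y : ℝ)
    (hy : y ∈ {y : ℝ | ∃ a b : ℝ, (∀ t > 0, a * t + b ≤ phi14 t) ∧
      y = a * (5 * Real.pi / 2 + 2 * k * Real.pi) + b}) :
    y ≤ (5 * Real.pi / 2 + 2 * k * Real.pi) ^ 2 + (5 * Real.pi / 2 + 2 * k * Real.pi)
        + Real.pi ^ 2 := by
  set x : ℝ := 5 * Real.pi / 2 + 2 * k * Real.pi with hx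
  have hpi := Real.pi_pos
  obtain ⟨a, b, hab, rfl⟩ := hy
  have ht1 : (0:ℝ) < x - Real.pi := by
    have : (0:ℝ) ≤ 2 * k * Real.pi := by positivity
    simp only [hx]; nlinarith
  have ht2 : (0:ℝ) < x + Real.pi := by linarith
  have h1 := hab (x - Real.pi) ht1
  have h2 := hab (x + Real.pi) ht2
  have e1 : phi14 (x - Real.pi) = (x - Real.pi) ^ 2 + (x - Real.pi) := by
    have : Real.sin (x - Real.pi) = -1 := by
      have : x - Real.pi = 3 * Real.pi / 2 + 2 * k * Real.pi := by simp [hx]; ring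
      rw [this, sin_key2]
    unfold phi14; rw [this]; ring
  have e2 : phi14 (x + Real.pi) = (x + Real.pi) ^ 2 + (x + Real.pi) := by
    have : Real.sin (x + Real.pi) = -1 := by
      have : x + Real.pi = 3 * Real.pi / 2 + 2 * (k + 1 : ℕ) * Real.pi := by
        simp [hx]; push_cast; ring
      rw [this, sin_key2]
    unfold phi14; rw [this]; ring
  rw [e1] at h1; rw [e2] at h2
  nlinarith

/-- the chord upper bound at the midpoint -/
private lemma biconj_ub (k : ℕ) :
    biconj phi14 (5 * Real.pi / 2 + 2 * k * Real.pi)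
      ≤ (5 * Real.pi / 2 + 2 * k * Real.pi) ^ 2 + (5 * Real.pi / 2 + 2 * k * Real.pi)
        + Real.pi ^ 2 := by
  have hpi := Real.pi_pos
  refine csSup_le ?_ (mem_bound k)
  refine ⟨0, 0, 0, fun t ht => ?_, by ring⟩
  have := phi_lb t ht; nlinarith

private lemma biconj_lb (k : ℕ) :
    (5 * Real.pi / 2 + 2 * k * Real.pi) ^ 2 + (5 * Real.pi / 2 + 2 * k * Real.pi)
      ≤ biconj phi14 (5 * Real.pi / 2 + 2 * k * Real.pi) := by
  set x : ℝ := 5 * Real.pi / 2 + 2 * k * Real.pi with hx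
  have hbdd : BddAbove {y : ℝ | ∃ a b : ℝ, (∀ t > 0, a * t + b ≤ phi14 t) ∧ y = a * x + b} :=
    ⟨x ^ 2 + x + Real.pi ^ 2, mem_bound k⟩
  have hmem : x ^ 2 + x ∈
      {y : ℝ | ∃ a b : ℝ, (∀ t > 0, a * t + b ≤ phi14 t) ∧ y = a * x + b} := by
    refine ⟨2 * x + 1, -(x ^ 2), fun t ht => ?_, by ring⟩
    have := phi_lb t ht
    nlinarith [sq_nonneg (t - x)]
  exact le_csSup hbdd hmem

private lemma psi_val (k : ℕ) :
    psi14 (5 * Real.pi / 2 + 2 * k * Real.pi)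
      = (5 * Real.pi / 2 + 2 * k * Real.pi) ^ 2 + (5 * Real.pi / 2 + 2 * k * Real.pi) := by
  unfold psi14 phi14
  rw [sin_key1]; ring

theorem stmt_14 :
    (∀ x > 0, 0 ≤ psi14 x) ∧
    Filter.liminf (fun x => ((psi14 x / x : ℝ) : EReal)) atTop = ⊤ ∧
    Tendsto (fun x => phi14 x - psi14 x) atTop atTop ∧
    Filter.liminf (fun x => ((biconj phi14 x - psi14 x : ℝ) : EReal)) atTop < ⊤ ∧
    (∀ k : ℕ, 1 ≤ k →
      0 ≤ biconj phi14 (5 * Real.pi / 2 + 2 * k * Real.pi) -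
            psi14 (5 * Real.pi / 2 + 2 * k * Real.pi) ∧
      biconj phi14 (5 * Real.pi / 2 + 2 * k * Real.pi) -
          psi14 (5 * Real.pi / 2 + 2 * k * Real.pi) ≤ Real.pi ^ 2) := by
  have hpi := Real.pi_pos
  refine ⟨psi_nonneg, ?_, ?_, ?_, ?_⟩
  · -- liminf ψ/x = ⊤
    refine Filter.Tendsto.liminf_eq ?_
    rw [EReal.tendsto_nhds_top_iff_real]
    intro c
    filter_upwards [eventually_gt_atTop (0:ℝ), eventually_gt_atTop (c + 1)] with x hx hcx
    have hdiv : psi14 x / x = x + Real.sin x := by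
      unfold psi14 phi14; field_simp; ring
    rw [hdiv]
    have : c < x + Real.sin x := by nlinarith [Real.neg_one_le_sin x]
    exact_mod_cast EReal.coe_lt_coe_iff.mpr this
  · -- φ - ψ = 2x → ∞
    have : (fun x : ℝ => phi14 x - psi14 x) = fun x : ℝ => 2 * x := by
      funext x; unfold psi14; ring
    rw [this]
    exact tendsto_id.const_mul_atTop two_pos
  · -- liminf < ⊤
    refine lt_of_le_of_lt (Filter.liminf_le_of_frequently_le'
      (x := ((Real.pi ^ 2 : ℝ) : EReal)) ?_) (EReal.coe_lt_top _)
    rw [Filter.frequently_atTop]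
    intro a
    obtain ⟨k, hk⟩ := exists_nat_gt (a / Real.pi)
    refine ⟨5 * Real.pi / 2 + 2 * k * Real.pi, ?_, ?_⟩
    · have : a / Real.pi < k := hk
      have : a < k * Real.pi := by
        rwa [div_lt_iff₀ hpi] at this
      nlinarith
    · have h1 := biconj_ub k
      rw [EReal.coe_le_coe_iff]
      rw [psi_val k]
      linarith
  · intro k _
    constructor
    · have := biconj_lb k; rw [psi_val k]; linarith
    · have := biconj_ub k; rw [psi_val k]; linarith
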